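/- arXiv:2010.00186 — 5 statements merged into one kernel-verified Lean document; each statement's English description precedes it below -/
import Mathlib

section
/- Let h: ℝⁿ → ℝ be quasiconvex and L-Lipschitz continuous on ℝⁿ. Let z ∈ ℝⁿ, let L̄_h(z) denote the closure of the strict sublevel set {x : h(x) < h(z)}, and let g be a unit vector in the normal cone to L̄_h(z) at z. Then for every y ∈ L̄_h(z), one has L·⟨g, y - z⟩ ≤ h(y) - h(z) ≤ 0. -/
/-!
Let `t = ⟪g, z - y⟫ ≥ 0` and let `p = y + t • g` be the foot of `y` on the supporting hyperplane
`{x | ⟪g, x - z⟫ = 0}`. The open half-space beyond that hyperplane misses the sublevel set, so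
`h ≥ h z` there, and by continuity also at `p`. Hence `h z - h y ≤ h p - h y ≤ L ‖p - y‖ = L t`.
-/

open scoped RealInnerProductSpace
open Filter Topology

section

variable {E : Type*} [NormedAddCommGroup E] [InnerProductSpace ℝ E]

theorem apply_ge_of_inner_sub_nonneg {h : E → ℝ} (hh : Continuous h) {z g : E} (hg : g ≠ 0)
    (hnormal : ∀ x, h x < h z → ⟪g, x - z⟫ ≤ 0) {x : E} (hx : 0 ≤ ⟪g, x - z⟫) :
    h z ≤ h x := by
  have beyond : ∀ ε : ℝ, 0 < ε → h z ≤ h (x + ε • g) := by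
    intro ε hε
    by_contra! hlt
    have hinner := hnormal _ hlt
    rw [add_sub_right_comm, inner_add_right, real_inner_smul_right,
      real_inner_self_eq_norm_sq] at hinner
    have hpos : 0 < ε * ‖g‖ ^ 2 := by positivity
    linarith
  have hlim : Tendsto (fun ε : ℝ => h (x + ε • g)) (𝓝[>] 0) (𝓝 (h x)) := by
    have hcont : Continuous fun ε : ℝ => h (x + ε • g) := by fun_prop
    simpa using (hcont.tendsto 0).mono_left nhdsWithin_le_nhds
  exact ge_of_tendsto hlim (eventually_nhdsWithin_of_forall beyond)

end

theorem normal_subgradient_ineq_general {n : ℕ}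
    (h : EuclideanSpace ℝ (Fin n) → ℝ)
    (L : ℝ)
    (hlip : ∀ x y, |h x - h y| ≤ L * ‖x - y‖)
    (z : EuclideanSpace ℝ (Fin n))
    (g : EuclideanSpace ℝ (Fin n)) (hg : ‖g‖ = 1)
    (hgnormal : ∀ x ∈ closure {x | h x < h z}, ⟪g, x - z⟫ ≤ 0) :
    ∀ y ∈ closure {x | h x < h z},
      L * ⟪g, y - z⟫ ≤ h y - h z ∧ h y - h z ≤ 0 := by
  intro y hy
  have hcont : Continuous h := (LipschitzWith.of_dist_le' fun x y => by
    rw [Real.dist_eq, dist_eq_norm]; exact hlip x y).continuous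
  have hflip : ⟪g, y - z⟫ = -⟪g, z - y⟫ := by rw [← neg_sub, inner_neg_right]
  set t := ⟪g, z - y⟫
  have ht : 0 ≤ t := by linarith [hgnormal y hy]
  have hfoot : h z ≤ h (y + t • g) := by
    refine apply_ge_of_inner_sub_nonneg hcont (norm_ne_zero_iff.1 (by simp [hg]))
      (fun x hx => hgnormal x (subset_closure hx)) (le_of_eq ?_)
    rw [add_sub_right_comm, inner_add_right, real_inner_smul_right, real_inner_self_eq_norm_sq,
      hg, hflip]
    ring
  have hstep : h (y + t • g) - h y ≤ L * t :=
    calc h (y + t • g) - h y ≤ |h (y + t • g) - h y| := le_abs_self _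
      _ ≤ L * ‖y + t • g - y‖ := hlip _ _
      _ = L * t := by rw [add_sub_cancel_left, norm_smul, hg, Real.norm_of_nonneg ht, mul_one]
  have hle : h y ≤ h z := closure_lt_subset_le hcont continuous_const hy
  rw [hflip, mul_neg]
  exact ⟨by linarith, by linarith⟩

/-- For a quasiconvex `L`-Lipschitz function `h`, a unit normal `g` to the closure of the
strict sublevel set of `h` at `z`, and any `y` in that closure,
`L * ⟪g, y - z⟫ ≤ h y - h z ≤ 0`. -/
theorem normal_subgradient_ineq {n : ℕ}
    (h : EuclideanSpace ℝ (Fin n) → ℝ)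
    (hq : ∀ c : ℝ, Convex ℝ {x | h x < c})
    (L : ℝ) (hL : 0 ≤ L)
    (hlip : ∀ x y, |h x - h y| ≤ L * ‖x - y‖)
    (z : EuclideanSpace ℝ (Fin n))
    (g : EuclideanSpace ℝ (Fin n)) (hg : ‖g‖ = 1)
    (hgnormal : ∀ x ∈ closure {x | h x < h z}, ⟪g, x - z⟫ ≤ 0) :
    ∀ y ∈ closure {x | h x < h z},
      L * ⟪g, y - z⟫ ≤ h y - h z ∧ h y - h z ≤ 0 :=
  normal_subgradient_ineq_general h L hlip z g hg hgnormal
end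

section
/- Let φ: ℝⁿ → ℝ be a continuous quasiconvex function and x ∈ ℝⁿ. If B(x̄, ε) ⊆ L_φ(x) for some point x̄ and ε ≥ 0, where L_φ(x) = {y : φ(y) < φ(x)}, then for every unit vector g ∈ ∂*φ(x), one has ⟨g, x - x̄⟩ > ε. -/
open scoped RealInnerProductSpace

/-- If a closed ball `B(x̄, ε)` is contained in the strict sublevel set `L_φ(x)` of a
continuous quasiconvex function `φ`, then every unit vector `g ∈ ∂*φ(x)` satisfies
`⟪g, x - x̄⟫ > ε`. -/
theorem star_subgradient_ball_ineq {n : ℕ}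
    (φ : EuclideanSpace ℝ (Fin n) → ℝ)
    (hcont : Continuous φ)
    (hq : ∀ x y : EuclideanSpace ℝ (Fin n), ∀ l : ℝ, 0 ≤ l → l ≤ 1 →
        φ ((1 - l) • x + l • y) ≤ max (φ x) (φ y))
    (x xbar : EuclideanSpace ℝ (Fin n)) (ε : ℝ) (hε : 0 ≤ ε)
    (hball : Metric.closedBall xbar ε ⊆ {y | φ y < φ x})
    (g : EuclideanSpace ℝ (Fin n)) (hg : ‖g‖ = 1)
    (hgstar : ∀ y : EuclideanSpace ℝ (Fin n), φ y < φ x → ⟪g, y - x⟫ < 0) :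
    ⟪g, x - xbar⟫ > ε := by
  have hy : xbar + ε • g ∈ Metric.closedBall xbar ε := by
    simp [Metric.mem_closedBall, dist_eq_norm, norm_smul, hg, abs_of_nonneg hε]
  have h := hgstar _ (hball hy)
  have h1 : ⟪g, (xbar + ε • g) - x⟫ = ⟪g, xbar⟫ + ε * ‖g‖ ^ 2 - ⟪g, x⟫ := by
    rw [inner_sub_right, inner_add_right, inner_smul_right, real_inner_self_eq_norm_sq]
  have h2 : ⟪g, x - xbar⟫ = ⟪g, x⟫ - ⟪g, xbar⟫ := inner_sub_right _ _ _
  rw [hg] at h1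
  rw [h1] at h
  rw [h2]
  linarith
end

section
/- Let C₁, ..., C_m be nonempty closed convex subsets of ℝⁿ with nonempty intersection C = ∩ᵢ Cᵢ, and let ω₁, ..., ω_m be reals with 0 < ωᵢ < 1 and Σᵢ ωᵢ = 1. If x̄ satisfies x̄ = Σᵢ ωᵢ P_{Cᵢ}(x̄), then x̄ ∈ C. -/
open scoped RealInnerProductSpace

set_option maxHeartbeats 1000000

/-- A fixed point of the weighted projection operator `P_ω` belongs to the intersection
of the sets. -/
theorem fixed_point_weighted_projection_mem_inter {n m : ℕ}
    (C : Fin m → Set (EuclideanSpace ℝ (Fin n)))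
    (hC : ∀ i, (C i).Nonempty ∧ IsClosed (C i) ∧ Convex ℝ (C i))
    (hne : (⋂ i, C i).Nonempty)
    (ω : Fin m → ℝ) (hω : ∀ i, 0 < ω i ∧ ω i < 1) (hsum : ∑ i, ω i = 1)
    (P : Fin m → EuclideanSpace ℝ (Fin n) → EuclideanSpace ℝ (Fin n))
    (hP : ∀ i x, P i x ∈ C i ∧ ∀ y ∈ C i, ‖x - P i x‖ ≤ ‖x - y‖)
    (xbar : EuclideanSpace ℝ (Fin n))
    (hfix : xbar = ∑ i, ω i • P i xbar) :
    xbar ∈ ⋂ i, C i := by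
  obtain ⟨z, hz⟩ := hne
  -- obtuse angle property at each projection
  have hobtuse : ∀ i, ⟪xbar - P i xbar, z - P i xbar⟫ ≤ 0 := by
    intro i
    have hmem : P i xbar ∈ C i := (hP i xbar).1
    haveI : Nonempty (C i) := ⟨⟨P i xbar, hmem⟩⟩
    have hbdd : BddBelow (Set.range fun w : C i => ‖xbar - ↑w‖) := by
      refine ⟨0, ?_⟩
      rintro _ ⟨w, rfl⟩
      exact norm_nonneg _
    have heq : ‖xbar - P i xbar‖ = ⨅ w : C i, ‖xbar - ↑w‖ :=
      le_antisymm (le_ciInf fun w => (hP i xbar).2 w.1 w.2)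
        (ciInf_le hbdd ⟨P i xbar, hmem⟩)
    exact (norm_eq_iInf_iff_real_inner_le_zero (hC i).2.2 hmem).1 heq z
      (Set.mem_iInter.1 hz i)
  -- each term is at least the squared distance
  have hterm : ∀ i, ‖xbar - P i xbar‖ ^ 2 ≤ ⟪xbar - P i xbar, xbar - z⟫ := by
    intro i
    have : ⟪xbar - P i xbar, xbar - z⟫ =
        ⟪xbar - P i xbar, xbar - P i xbar⟫ - ⟪xbar - P i xbar, z - P i xbar⟫ := by
      rw [← inner_sub_right]
      congr 1
      abel
    rw [this, real_inner_self_eq_norm_sq]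
    linarith [hobtuse i]
  -- the weighted sum of the inner products vanishes
  have hzero : ∑ i, ω i * ⟪xbar - P i xbar, xbar - z⟫ = 0 := by
    have : ∑ i, ω i * ⟪xbar - P i xbar, xbar - z⟫
        = ⟪∑ i, ω i • (xbar - P i xbar), xbar - z⟫ := by
      rw [sum_inner]
      exact Finset.sum_congr rfl fun i _ => (real_inner_smul_left _ _ _).symm
    rw [this]
    have hsum' : ∑ i, ω i • (xbar - P i xbar) = 0 := by
      have : ∑ i, ω i • (xbar - P i xbar)
          = (∑ i, ω i) • xbar - ∑ i, ω i • P i xbar := by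
        rw [Finset.sum_smul, ← Finset.sum_sub_distrib]
        exact Finset.sum_congr rfl fun i _ => smul_sub _ _ _
      rw [this, hsum, one_smul, ← hfix, sub_self]
    rw [hsum', inner_zero_left]
  -- hence each inner product is zero, so xbar = P i xbar
  have hnn : ∀ i ∈ Finset.univ, 0 ≤ ω i * ⟪xbar - P i xbar, xbar - z⟫ := by
    intro i _
    exact mul_nonneg (hω i).1.le ((sq_nonneg _).trans (hterm i))
  have hall := (Finset.sum_eq_zero_iff_of_nonneg hnn).1 hzero
  refine Set.mem_iInter.2 fun i => ?_
  have h0 : ⟪xbar - P i xbar, xbar - z⟫ = 0 := by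
    have := hall i (Finset.mem_univ i)
    exact (mul_eq_zero.1 this).resolve_left (hω i).1.ne'
  have : ‖xbar - P i xbar‖ ^ 2 ≤ 0 := by rw [← h0]; exact hterm i
  have hx : xbar = P i xbar := by
    have := le_antisymm this (sq_nonneg _)
    have hn : ‖xbar - P i xbar‖ = 0 := by
      nlinarith [norm_nonneg (xbar - P i xbar)]
    rw [norm_sub_eq_zero_iff] at hn
    exact hn
  rw [hx]
  exact (hP i xbar).1
end

section
/- Let C₁, ..., C_m be closed convex subsets of ℝⁿ whose intersection C is nonempty, let ω₁, ..., ω_m be positive reals summing to 1, and set P_ω(x) = Σᵢ ωᵢ P_{Cᵢ}(x). Let x, g ∈ ℝⁿ with ‖g‖ = 1, α > 0, λ ∈ (0,1), and define x⁺ = (1-λ)x + λ P_ω(x - αg). Then for every z ∈ C: ‖x⁺ - z‖² ≤ ‖x - z‖² + 2λα⟨g, z - x⟩ + λα² - λ(1-λ)‖x - P_ω(x - αg)‖². -/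
open scoped RealInnerProductSpace

/-- A metric projection onto a convex set is "quasi-nonexpansive" at points of the set. -/
lemma proj_quasi_nonexpansive {E : Type*} [NormedAddCommGroup E] [InnerProductSpace ℝ E]
    {K : Set E} (hK : Convex ℝ K) {y p z : E} (hp : p ∈ K) (hz : z ∈ K)
    (hmin : ∀ w ∈ K, ‖y - p‖ ≤ ‖y - w‖) : ‖p - z‖ ≤ ‖y - z‖ := by
  haveI : Nonempty K := ⟨⟨p, hp⟩⟩
  have hinf : ‖y - p‖ = ⨅ w : K, ‖y - (w : E)‖ := by
    refine le_antisymm (le_ciInf fun w => hmin w w.2) ?_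
    have hb : BddBelow (Set.range fun w : K => ‖y - (w : E)‖) :=
      ⟨0, by rintro _ ⟨w, rfl⟩; exact norm_nonneg _⟩
    exact ciInf_le hb ⟨p, hp⟩
  have hvar : ⟪y - p, z - p⟫ ≤ 0 :=
    ((norm_eq_iInf_iff_real_inner_le_zero hK hp).1 hinf) z hz
  have h1 : ‖p - z‖ ^ 2 ≤ ‖y - z‖ ^ 2 := by
    have e1 : ‖y - z‖ ^ 2 = ‖(y - p) + (p - z)‖ ^ 2 := by rw [sub_add_sub_cancel]
    rw [e1, norm_add_sq_real]
    have e2 : ⟪y - p, p - z⟫ = -⟪y - p, z - p⟫ := by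
      rw [show p - z = -(z - p) by abel, inner_neg_right]
    nlinarith [sq_nonneg (‖y - p‖), hvar]
  nlinarith [norm_nonneg (p - z), norm_nonneg (y - z), h1]

/-- Key estimate for the iterate `x⁺ = (1-λ)x + λ P_ω(x - αg)` of the parallel
subgradient projection algorithm. -/
theorem iterate_estimate {n m : ℕ}
    (C : Fin m → Set (EuclideanSpace ℝ (Fin n)))
    (hC : ∀ i, IsClosed (C i) ∧ Convex ℝ (C i))
    (hne : (⋂ i, C i).Nonempty)
    (ω : Fin m → ℝ) (hω : ∀ i, 0 < ω i) (hsum : ∑ i, ω i = 1)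
    (P : Fin m → EuclideanSpace ℝ (Fin n) → EuclideanSpace ℝ (Fin n))
    (hP : ∀ i x, P i x ∈ C i ∧ ∀ y ∈ C i, ‖x - P i x‖ ≤ ‖x - y‖)
    (Pω : EuclideanSpace ℝ (Fin n) → EuclideanSpace ℝ (Fin n))
    (hPω : ∀ x, Pω x = ∑ i, ω i • P i x)
    (x g : EuclideanSpace ℝ (Fin n)) (hg : ‖g‖ = 1)
    (α : ℝ) (hα : 0 < α) (l : ℝ) (hl0 : 0 < l) (hl1 : l < 1)
    (xplus : EuclideanSpace ℝ (Fin n))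
    (hx : xplus = (1 - l) • x + l • Pω (x - α • g)) :
    ∀ z ∈ ⋂ i, C i,
      ‖xplus - z‖ ^ 2 ≤ ‖x - z‖ ^ 2 + 2 * l * α * ⟪g, z - x⟫ + l * α ^ 2
        - l * (1 - l) * ‖x - Pω (x - α • g)‖ ^ 2 := by
  intro z hz
  set y : EuclideanSpace ℝ (Fin n) := x - α • g with hy
  set p : EuclideanSpace ℝ (Fin n) := Pω y with hp
  -- each projection is quasi-nonexpansive at z
  have hzi : ∀ i, z ∈ C i := fun i => Set.mem_iInter.1 hz i
  have hPi : ∀ i, ‖P i y - z‖ ≤ ‖y - z‖ := fun i =>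
    proj_quasi_nonexpansive (hC i).2 (hP i y).1 (hzi i) (hP i y).2
  -- the averaged projection is quasi-nonexpansive at z
  have hpz : ‖p - z‖ ≤ ‖y - z‖ := by
    have hzsum : z = ∑ i, ω i • z := by
      rw [← Finset.sum_smul, hsum, one_smul]
    calc ‖p - z‖ = ‖∑ i, ω i • (P i y - z)‖ := by
          rw [hp, hPω]
          have : ∑ i, ω i • (P i y - z) = (∑ i, ω i • P i y) - ∑ i, ω i • z := by
            simp [smul_sub, Finset.sum_sub_distrib]
          rw [this, ← hzsum]
      _ ≤ ∑ i, ‖ω i • (P i y - z)‖ := norm_sum_le _ _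
      _ = ∑ i, ω i * ‖P i y - z‖ := by
          refine Finset.sum_congr rfl fun i _ => ?_
          rw [norm_smul, Real.norm_eq_abs, abs_of_pos (hω i)]
      _ ≤ ∑ i, ω i * ‖y - z‖ :=
          Finset.sum_le_sum fun i _ => by
            exact mul_le_mul_of_nonneg_left (hPi i) (hω i).le
      _ = ‖y - z‖ := by rw [← Finset.sum_mul, hsum, one_mul]
  have hpz2 : ‖p - z‖ ^ 2 ≤ ‖y - z‖ ^ 2 := by
    exact pow_le_pow_left₀ (norm_nonneg _) hpz 2
  -- ‖y - z‖² expansion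
  have hyz : ‖y - z‖ ^ 2 = ‖x - z‖ ^ 2 + 2 * α * ⟪g, z - x⟫ + α ^ 2 := by
    have : y - z = (x - z) - α • g := by rw [hy]; abel
    rw [this, norm_sub_sq_real, real_inner_smul_right, norm_smul,
      Real.norm_eq_abs, abs_of_pos hα]
    have h1 : ⟪g, z - x⟫ = -⟪x - z, g⟫ := by
      rw [real_inner_comm, show z - x = -(x - z) by abel, inner_neg_left]
    rw [hg]
    nlinarith [h1]
  -- convex combination identity
  have key : ∀ u v : EuclideanSpace ℝ (Fin n), ‖(1 - l) • u + l • v‖ ^ 2 =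
      (1 - l) * ‖u‖ ^ 2 + l * ‖v‖ ^ 2 - l * (1 - l) * ‖u - v‖ ^ 2 := by
    intro u v
    have h1 := norm_add_sq_real ((1 - l) • u) (l • v)
    have h2 := norm_sub_sq_real u v
    rw [real_inner_smul_left, real_inner_smul_right, norm_smul, norm_smul,
      Real.norm_eq_abs, Real.norm_eq_abs, abs_of_pos hl0,
      abs_of_pos (by linarith : (0:ℝ) < 1 - l)] at h1
    linear_combination h1 + l * (1 - l) * h2
  have hcomb : ‖xplus - z‖ ^ 2 =
      (1 - l) * ‖x - z‖ ^ 2 + l * ‖p - z‖ ^ 2 - l * (1 - l) * ‖x - p‖ ^ 2 := by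
    have hx' : xplus - z = (1 - l) • (x - z) + l • (p - z) := by
      rw [hx]; module
    have hxp : x - p = (x - z) - (p - z) := by abel
    rw [hx', key, ← hxp]
  have hgoal : ‖x - Pω (x - α • g)‖ = ‖x - p‖ := by rw [hp, hy]
  rw [hgoal, hcomb]
  nlinarith [hpz2, hyz, hl0.le, hl1]
end

section
/- Let C₁, ..., C_m be closed convex subsets of ℝⁿ, ωᵢ positive with Σωᵢ = 1, x^k ∈ ℝⁿ, α_k > 0, g^k a unit vector, and suppose Σᵢ ωᵢ P_{Cᵢ}(x^k - α_k g^k) = x^k. Then ⟨g^k, y - x^k⟩ ≥ 0 for every y ∈ C = ∩ᵢ Cᵢ. -/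
open scoped RealInnerProductSpace

/-- If `x = Σ ωᵢ P_{Cᵢ}(x - αg)` then `⟪g, y - x⟫ ≥ 0` for every `y` in the intersection
of the sets `Cᵢ`. -/
theorem fixed_point_implies_inner_nonneg {n m : ℕ}
    (C : Fin m → Set (EuclideanSpace ℝ (Fin n)))
    (hC : ∀ i, IsClosed (C i) ∧ Convex ℝ (C i))
    (ω : Fin m → ℝ) (hω : ∀ i, 0 < ω i) (hsum : ∑ i, ω i = 1)
    (P : Fin m → EuclideanSpace ℝ (Fin n) → EuclideanSpace ℝ (Fin n))
    (hP : ∀ i u, P i u ∈ C i ∧ ∀ y ∈ C i, ⟪u - P i u, y - P i u⟫ ≤ 0)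
    (x g : EuclideanSpace ℝ (Fin n)) (hg : ‖g‖ = 1)
    (α : ℝ) (hα : 0 < α)
    (hfix : ∑ i, ω i • P i (x - α • g) = x) :
    ∀ y ∈ ⋂ i, C i, ⟪g, y - x⟫ ≥ 0 := by
  intro y hy
  set u := x - α • g with hu
  have hwsum : ∑ i, ω i • (x - P i u) = 0 := by
    have h1 : ∑ i, ω i • (x - P i u) = (∑ i, ω i) • x - ∑ i, ω i • P i u := by
      rw [Finset.sum_smul, ← Finset.sum_sub_distrib]
      simp [smul_sub]
    rw [h1, hsum, hfix, one_smul, sub_self]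
  have hineq : ∀ i, ⟪u - P i u, y - P i u⟫ ≤ 0 := fun i =>
    (hP i u).2 y (Set.mem_iInter.mp hy i)
  have hsum_le : ∑ i, ω i * ⟪u - P i u, y - P i u⟫ ≤ 0 :=
    Finset.sum_nonpos fun i _ => mul_nonpos_of_nonneg_of_nonpos (hω i).le (hineq i)
  have hexpand : ∀ i, ⟪u - P i u, y - P i u⟫ =
      ⟪x - P i u, y - x⟫ + ‖x - P i u‖ ^ 2 - α * ⟪g, y - x⟫ - α * ⟪g, x - P i u⟫ := by
    intro i
    have h1 : u - P i u = (x - P i u) - α • g := by rw [hu]; abel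
    have h2 : y - P i u = (y - x) + (x - P i u) := by abel
    rw [h1, h2, inner_sub_left, inner_add_right, inner_add_right,
      real_inner_smul_left, real_inner_smul_left, real_inner_self_eq_norm_sq,
      real_inner_comm (x - P i u) g]
    ring
  have e1 : ∑ i, ω i * ⟪x - P i u, y - x⟫ = 0 := by
    simp_rw [← real_inner_smul_left]
    rw [← sum_inner, hwsum, inner_zero_left]
  have e2 : ∑ i, ω i * ⟪g, x - P i u⟫ = 0 := by
    simp_rw [← real_inner_smul_right]
    rw [← inner_sum, hwsum, inner_zero_right]
  have hkey : ∑ i, ω i * ⟪u - P i u, y - P i u⟫ =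
      ∑ i, ω i * ‖x - P i u‖ ^ 2 - α * ⟪g, y - x⟫ := by
    calc ∑ i, ω i * ⟪u - P i u, y - P i u⟫
        = ∑ i, (ω i * ⟪x - P i u, y - x⟫ + ω i * ‖x - P i u‖ ^ 2
            - ω i * (α * ⟪g, y - x⟫) - α * (ω i * ⟪g, x - P i u⟫)) := by
          refine Finset.sum_congr rfl fun i _ => ?_
          rw [hexpand i]; ring
      _ = ∑ i, ω i * ⟪x - P i u, y - x⟫ + ∑ i, ω i * ‖x - P i u‖ ^ 2
          - ∑ i, ω i * (α * ⟪g, y - x⟫) - ∑ i, α * (ω i * ⟪g, x - P i u⟫) := by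
          rw [Finset.sum_sub_distrib, Finset.sum_sub_distrib, Finset.sum_add_distrib]
      _ = ∑ i, ω i * ‖x - P i u‖ ^ 2 - α * ⟪g, y - x⟫ := by
          rw [e1, ← Finset.sum_mul, hsum, ← Finset.mul_sum, e2]
          ring
  have hnn : 0 ≤ ∑ i, ω i * ‖x - P i u‖ ^ 2 :=
    Finset.sum_nonneg fun i _ => mul_nonneg (hω i).le (sq_nonneg _)
  have : α * ⟪g, y - x⟫ ≥ 0 := by
    rw [hkey] at hsum_le; linarith
  exact nonneg_of_mul_nonneg_right this hα
end
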